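/- For every α > 0 the following holds. Set λ_n = e^{−1} + α·(log n)^{−2} and ℓ_n = ⌈(log n)^3/α⌉. Then P( there exist an integer ℓ' with ℓ_n ≤ ℓ' < 2ℓ_n and a path γ ∈ Γ_{ℓ'} with X(γ) ≤ λ_n·ℓ' and M(γ) ≥ 3·log n ) → 0 as n → ∞. -/

import Mathlib

/-!
If a path `γ` of length `ℓ` is light, `X(γ) ≤ λℓ`, but its partial sum after `k` edges
deviates by `m` from `(k/ℓ) X(γ)`, then its first `k` or its last `ℓ - k` edges form a path
of some length `j ≤ ℓ` with weight at most `λj - m`. For a fixed path of length `j`, a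
Chernoff bound with parameter `1/λ` gives `P(X ≤ λj - m) ≤ e^{j - m/λ} (λ/n)^j`, and there
are at most `n^{j+1}` such paths, so a union bound over `j < 2ℓ_n` gives the bound
`2ℓ_n · n e^{-m/λ} (eλ)^{2ℓ_n}`. With `m = 3 log n` and `λ = λ_n` we have
`e^{-m/λ} ≈ n^{-3e}` and `(eλ)^{2ℓ_n} ≲ n^{2e}`, so the bound is
`polylog(n) · n^{1-e} → 0`.
-/

open MeasureTheory ProbabilityTheory Filter Finset

namespace Paper

/-- A path of length `ℓ` in the complete graph on `Fin n`: a sequence of `ℓ+1` distinct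
vertices. -/
abbrev Path (n ℓ : ℕ) := {v : Fin (ℓ + 1) → Fin n // Function.Injective v}

/-- The `i`-th edge of a path. -/
def Path.edge {n ℓ : ℕ} (γ : Path n ℓ) (i : Fin ℓ) : Sym2 (Fin n) :=
  s(γ.1 i.castSucc, γ.1 i.succ)

/-- The total weight `X(γ)` of a path. -/
noncomputable def weight {n ℓ : ℕ} (ω : Sym2 (Fin n) → ℝ) (γ : Path n ℓ) : ℝ :=
  ∑ i : Fin ℓ, ω (γ.edge i)

/-- Partial sum of the first `k` edge weights of a path. -/
noncomputable def partialSum {n ℓ : ℕ} (ω : Sym2 (Fin n) → ℝ) (γ : Path n ℓ) (k : ℕ) : ℝ :=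
  ∑ i : Fin ℓ, if (i : ℕ) < k then ω (γ.edge i) else 0

/-- The deviation `M(γ) = max_{1 ≤ k ≤ ℓ} |∑_{i=1}^k X_{e_i} - (k/ℓ) X(γ)|`. -/
noncomputable def deviation {n ℓ : ℕ} (ω : Sym2 (Fin n) → ℝ) (γ : Path n ℓ) : ℝ :=
  ⨆ k : Fin ℓ, |partialSum ω γ ((k : ℕ) + 1) - (((k : ℕ) + 1 : ℝ) / ℓ) * weight ω γ|

/-- The law of the i.i.d. edge weights: each edge carries an exponential variable with
mean `n` (rate `1/n`). -/
noncomputable def P (n : ℕ) : Measure (Sym2 (Fin n) → ℝ) :=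
  Measure.pi fun _ => expMeasure ((n : ℝ)⁻¹)

/-- `L n λ ω` : the maximal `ℓ` such that some path of length `ℓ` has weight at most `λℓ`
(`0` if there is none). -/
noncomputable def L (n : ℕ) (lam : ℝ) (ω : Sym2 (Fin n) → ℝ) : ℕ :=
  sSup {ℓ : ℕ | ∃ γ : Path n ℓ, weight ω γ ≤ lam * ℓ}

theorem lintegral_exp_neg_mul_expMeasure {β θ : ℝ} (hβ : 0 < β) (hθ : 0 < θ) :
    ∫⁻ x, ENNReal.ofReal (Real.exp (-(θ * x))) ∂expMeasure β
      = ENNReal.ofReal (β / (β + θ)) := by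
  have hdensity : ∀ x, exponentialPDF β x * ENNReal.ofReal (Real.exp (-(θ * x)))
      = ENNReal.ofReal (β / (β + θ)) * exponentialPDF (β + θ) x := by
    intro x
    rcases lt_or_ge x 0 with hx | hx
    · simp [exponentialPDF_of_neg hx]
    · rw [exponentialPDF_of_nonneg hx, exponentialPDF_of_nonneg hx,
        ← ENNReal.ofReal_mul (by positivity), ← ENNReal.ofReal_mul (by positivity)]
      congr 1
      rw [mul_assoc, ← Real.exp_add]
      field_simp
      ring_nf
  rw [expMeasure, gammaMeasure, lintegral_withDensity_eq_lintegral_mul _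
    (show Measurable (gammaPDF 1 β) from (measurable_gammaPDFReal 1 β).ennreal_ofReal)
    (by fun_prop)]
  simp only [Pi.mul_apply]
  rw [show (fun x => gammaPDF 1 β x * _) = _ from funext hdensity,
    lintegral_const_mul _ (show Measurable (exponentialPDF (β + θ)) from
      (measurable_exponentialPDFReal _).ennreal_ofReal),
    lintegral_exponentialPDF_eq_one (by positivity), mul_one]

theorem measure_pi_expMeasure_sum_le_le {ι : Type*} [Fintype ι] {β θ : ℝ} (hβ : 0 < β)
    (hθ : 0 < θ) (s : Finset ι) (a : ℝ) :
    Measure.pi (fun _ : ι => expMeasure β) {ω | ∑ i ∈ s, ω i ≤ a}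
      ≤ ENNReal.ofReal (Real.exp (θ * a) * (β / (β + θ)) ^ #s) := by
  have := isProbabilityMeasure_expMeasure hβ
  set μ := Measure.pi (fun _ : ι => expMeasure β)
  set f : ℝ → ENNReal := fun x => ENNReal.ofReal (Real.exp (-(θ * x)))
  have hf : Measurable f := by fun_prop
  have hfactor : ∀ ω : ι → ℝ, ENNReal.ofReal (Real.exp (θ * (a - ∑ i ∈ s, ω i)))
      = ENNReal.ofReal (Real.exp (θ * a)) * ∏ i ∈ s, f (ω i) := by
    intro ω
    rw [← ENNReal.ofReal_prod_of_nonneg fun _ _ => (Real.exp_pos _).le,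
      ← Real.exp_sum, ← ENNReal.ofReal_mul (Real.exp_pos _).le, ← Real.exp_add,
      Finset.sum_neg_distrib, ← Finset.mul_sum]
    ring_nf
  have hmarkov : μ {ω | ∑ i ∈ s, ω i ≤ a}
      ≤ ∫⁻ ω, ENNReal.ofReal (Real.exp (θ * (a - ∑ i ∈ s, ω i))) ∂μ := by
    refine (measure_mono fun ω (hω : _ ≤ a) => ?_).trans
      (one_mul (μ _) ▸ mul_meas_ge_le_lintegral₀ (by fun_prop) 1)
    exact ENNReal.one_le_ofReal.2 (Real.one_le_exp (mul_nonneg hθ.le (sub_nonneg.2 hω)))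
  have hindep : iIndepFun (fun i (ω : ι → ℝ) => f (ω i)) μ :=
    iIndepFun_pi fun _ => hf.aemeasurable
  calc μ {ω | ∑ i ∈ s, ω i ≤ a}
      ≤ ENNReal.ofReal (Real.exp (θ * a)) * ∫⁻ ω, ∏ i ∈ s, f (ω i) ∂μ := by
        rwa [lintegral_congr hfactor, lintegral_const_mul _ (by fun_prop)] at hmarkov
    _ = ENNReal.ofReal (Real.exp (θ * a)) * ENNReal.ofReal (β / (β + θ)) ^ #s := by
        rw [lintegral_prod_eq_prod_lintegral_of_indepFun s _ hindep (fun i => by fun_prop)]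
        have hmarginal (i : ι) : ∫⁻ ω, f (ω i) ∂μ = ENNReal.ofReal (β / (β + θ)) :=
          ((measurePreserving_eval _ i).lintegral_comp hf).trans
            (lintegral_exp_neg_mul_expMeasure hβ hθ)
        simp only [hmarginal, Finset.prod_const]
    _ = ENNReal.ofReal (Real.exp (θ * a) * (β / (β + θ)) ^ #s) := by
        rw [ENNReal.ofReal_mul (Real.exp_pos _).le, ENNReal.ofReal_pow (by positivity)]

namespace Path

variable {n ℓ : ℕ}

theorem edge_injective (γ : Path n ℓ) : Function.Injective γ.edge := by
  intro i j h
  rcases Sym2.eq_iff.1 h with ⟨h, -⟩ | ⟨h₁, h₂⟩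
  · exact Fin.castSucc_injective _ (γ.2 h)
  · have := congrArg Fin.val (γ.2 h₁)
    have := congrArg Fin.val (γ.2 h₂)
    simp only [Fin.val_castSucc, Fin.val_succ] at *
    omega

theorem card_le : Fintype.card (Path n ℓ) ≤ n ^ (ℓ + 1) :=
  (Fintype.card_subtype_le _).trans_eq (by simp)

def take (k : ℕ) {d : ℕ} (γ : Path n (k + d)) : Path n k :=
  ⟨γ.1 ∘ Fin.castLE (by omega), γ.2.comp (Fin.castLE_injective (by omega))⟩

def drop (k : ℕ) {d : ℕ} (γ : Path n (k + d)) : Path n d :=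
  ⟨γ.1 ∘ Fin.natAdd k, γ.2.comp (Fin.natAdd_injective _ _)⟩

theorem take_edge (k : ℕ) {d : ℕ} (γ : Path n (k + d)) (i : Fin k) :
    (γ.take k).edge i = γ.edge (Fin.castAdd d i) := rfl

theorem drop_edge (k : ℕ) {d : ℕ} (γ : Path n (k + d)) (i : Fin d) :
    (γ.drop k).edge i = γ.edge (Fin.natAdd k i) := rfl

end Path

section Subpaths

variable {n ℓ : ℕ} (ω : Sym2 (Fin n) → ℝ)

theorem weight_eq_sum_image (γ : Path n ℓ) :
    weight ω γ = ∑ e ∈ univ.image γ.edge, ω e :=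
  (Finset.sum_image fun _ _ _ _ h => γ.edge_injective h).symm

theorem weight_eq_weight_take_add_weight_drop {k d : ℕ} (γ : Path n (k + d)) :
    weight ω γ = weight ω (γ.take k) + weight ω (γ.drop k) := by
  simp only [weight, Fin.sum_univ_add, Path.take_edge, Path.drop_edge]

theorem partialSum_eq_weight_take {k d : ℕ} (γ : Path n (k + d)) :
    partialSum ω γ k = weight ω (γ.take k) := by
  simp [partialSum, weight, Fin.sum_univ_add, Path.take_edge]

theorem exists_le_abs_of_le_deviation {γ : Path n ℓ} {m : ℝ} (hm : 0 < m)
    (h : m ≤ deviation ω γ) :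
    ∃ k ≤ ℓ, m ≤ |partialSum ω γ k - (k / ℓ) * weight ω γ| := by
  rcases Nat.eq_zero_or_pos ℓ with rfl | hℓ
  · simp only [deviation, Real.iSup_of_isEmpty] at h
    linarith
  have : Nonempty (Fin ℓ) := ⟨⟨0, hℓ⟩⟩
  obtain ⟨k, hk⟩ := exists_eq_ciSup_of_finite
    (f := fun k : Fin ℓ => |partialSum ω γ (k + 1) - ((k + 1 : ℝ) / ℓ) * weight ω γ|)
  refine ⟨k + 1, k.2, ?_⟩
  rw [deviation, ← hk] at h
  exact_mod_cast h

theorem exists_light_subpath_of_le_abs {γ : Path n ℓ} {lam m : ℝ} {k : ℕ} (hk : k ≤ ℓ)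
    (hm : 0 < m) (hw : weight ω γ ≤ lam * ℓ)
    (hdev : m ≤ |partialSum ω γ k - (k / ℓ) * weight ω γ|) :
    ∃ j ≤ ℓ, ∃ δ : Path n j, weight ω δ ≤ lam * j - m := by
  obtain ⟨d, rfl⟩ := Nat.exists_eq_add_of_le hk
  rw [partialSum_eq_weight_take, weight_eq_weight_take_add_weight_drop] at hdev
  rw [weight_eq_weight_take_add_weight_drop] at hw
  set A := weight ω (γ.take k)
  set B := weight ω (γ.drop k)
  rcases Nat.eq_zero_or_pos (k + d) with h0 | hpos
  · obtain ⟨rfl, rfl⟩ : k = 0 ∧ d = 0 := by omega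
    simpa [A, B, weight] using hm.trans_le hdev
  push_cast at hw hdev
  have hL : (0 : ℝ) < k + d := by exact_mod_cast hpos
  have hfrac : 0 ≤ (k : ℝ) / (k + d) := by positivity
  have htake : (k / (k + d) : ℝ) * (A + B) ≤ lam * k := by
    calc (k / (k + d) : ℝ) * (A + B) ≤ k / (k + d) * (lam * (k + d)) :=
          mul_le_mul_of_nonneg_left hw hfrac
      _ = lam * k := by field_simp
  have hdrop : (A + B) - (k / (k + d) : ℝ) * (A + B) ≤ lam * d := by
    calc (A + B) - (k / (k + d) : ℝ) * (A + B) = d / (k + d) * (A + B) := by field_simp; ring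
      _ ≤ d / (k + d) * (lam * (k + d)) := mul_le_mul_of_nonneg_left hw (by positivity)
      _ = lam * d := by field_simp
  rcases le_abs'.1 hdev with h | h
  · exact ⟨k, by omega, γ.take k, by linarith⟩
  · exact ⟨d, by omega, γ.drop k, by linarith⟩

end Subpaths

section UnionBound

variable {n : ℕ}

theorem P_weight_le_le (hn : 0 < n) {ℓ : ℕ} (γ : Path n ℓ) {lam : ℝ} (hlam : 0 < lam)
    (a : ℝ) :
    P n {ω | weight ω γ ≤ a} ≤ ENNReal.ofReal (Real.exp (a / lam) * (lam / n) ^ ℓ) := by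
  have hcard : #(univ.image γ.edge) = ℓ := by
    rw [card_image_of_injective _ γ.edge_injective, card_univ, Fintype.card_fin]
  have hratio : (n : ℝ)⁻¹ / ((n : ℝ)⁻¹ + lam⁻¹) ≤ lam / n := by
    calc (n : ℝ)⁻¹ / ((n : ℝ)⁻¹ + lam⁻¹) ≤ (n : ℝ)⁻¹ / lam⁻¹ :=
          div_le_div_of_nonneg_left (by positivity) (by positivity) (by simp)
      _ = lam / n := by field_simp
  simp_rw [weight_eq_sum_image]
  refine (measure_pi_expMeasure_sum_le_le (θ := lam⁻¹) (by positivity) (by positivity) _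
    a).trans (ENNReal.ofReal_le_ofReal ?_)
  rw [hcard, inv_mul_eq_div]
  gcongr

theorem P_exists_path_weight_le_le (hn : 0 < n) {lam : ℝ} (hlam : 0 < lam) (j : ℕ) (m : ℝ) :
    P n {ω | ∃ δ : Path n j, weight ω δ ≤ lam * j - m}
      ≤ ENNReal.ofReal (n * Real.exp (-(m / lam)) * (Real.exp 1 * lam) ^ j) := by
  have hset : {ω | ∃ δ : Path n j, weight ω δ ≤ lam * j - m}
      = ⋃ δ : Path n j, {ω | weight ω δ ≤ lam * j - m} := by
    ext; simp
  have hexp : Real.exp ((lam * j - m) / lam) = Real.exp 1 ^ j * Real.exp (-(m / lam)) := by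
    rw [← Real.exp_nat_mul, ← Real.exp_add]
    congr 1
    field_simp
    ring
  calc P n {ω | ∃ δ : Path n j, weight ω δ ≤ lam * j - m}
      ≤ ∑ δ : Path n j, P n {ω | weight ω δ ≤ lam * j - m} :=
        hset ▸ measure_iUnion_fintype_le _ _
    _ ≤ ∑ _δ : Path n j, ENNReal.ofReal (Real.exp ((lam * j - m) / lam) * (lam / n) ^ j) :=
        sum_le_sum fun δ _ => P_weight_le_le hn δ hlam _
    _ = ENNReal.ofReal (Fintype.card (Path n j) *
          (Real.exp ((lam * j - m) / lam) * (lam / n) ^ j)) := by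
        rw [sum_const, card_univ, nsmul_eq_mul, ENNReal.ofReal_mul (Nat.cast_nonneg _),
          ENNReal.ofReal_natCast]
    _ ≤ ENNReal.ofReal ((n : ℝ) ^ (j + 1) *
          (Real.exp ((lam * j - m) / lam) * (lam / n) ^ j)) := by
        gcongr
        exact_mod_cast Path.card_le
    _ = ENNReal.ofReal (n * Real.exp (-(m / lam)) * (Real.exp 1 * lam) ^ j) := by
        have : (n : ℝ) ≠ 0 := by positivity
        rw [hexp, div_pow]
        congr 1
        field_simp
        ring

theorem P_exists_light_path_large_deviation_le (hn : 0 < n) {lam m : ℝ}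
    (hlam : Real.exp (-1) ≤ lam) (hm : 0 < m) (M : ℕ) :
    P n {ω | ∃ ℓ < M, ∃ γ : Path n ℓ,
        weight ω γ ≤ lam * ℓ ∧ m ≤ deviation ω γ} ≤
      ENNReal.ofReal (M * (n * Real.exp (-(m / lam)) * (Real.exp 1 * lam) ^ M)) := by
  have hlam0 : 0 < lam := (Real.exp_pos _).trans_le hlam
  have hgrowth : 1 ≤ Real.exp 1 * lam := by
    calc 1 = Real.exp 1 * Real.exp (-1) := by rw [← Real.exp_add]; norm_num
      _ ≤ Real.exp 1 * lam := by gcongr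
  refine (measure_mono (t := ⋃ j : Fin M, {ω | ∃ δ : Path n j, weight ω δ ≤ lam * j - m})
    ?_).trans ?_
  · rintro ω ⟨ℓ, hℓ, γ, hw, hdev⟩
    obtain ⟨k, hk, hk'⟩ := exists_le_abs_of_le_deviation ω hm hdev
    obtain ⟨j, hj, δ, hδ⟩ := exists_light_subpath_of_le_abs ω hk hm hw hk'
    exact Set.mem_iUnion.2 ⟨⟨j, by omega⟩, δ, hδ⟩
  calc _ ≤ ∑ j : Fin M, P n {ω | ∃ δ : Path n j, weight ω δ ≤ lam * j - m} :=
        measure_iUnion_fintype_le _ _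
    _ ≤ ∑ _j : Fin M, ENNReal.ofReal (n * Real.exp (-(m / lam)) * (Real.exp 1 * lam) ^ M) :=
        sum_le_sum fun j _ => (P_exists_path_weight_le_le hn hlam0 j m).trans
          (ENNReal.ofReal_le_ofReal (by gcongr; exact j.2.le))
    _ = ENNReal.ofReal (M * (n * Real.exp (-(m / lam)) * (Real.exp 1 * lam) ^ M)) := by
        rw [sum_const, card_univ, Fintype.card_fin, nsmul_eq_mul,
          ENNReal.ofReal_mul (Nat.cast_nonneg _), ENNReal.ofReal_natCast]

end UnionBound

theorem mul_exp_mul_pow_le {α x lam : ℝ} {M : ℕ} (hα : 0 < α) (hx : 1 ≤ x)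
    (hlam : lam = Real.exp (-1) + α * (x ^ 2)⁻¹) (hM : (M : ℝ) ≤ 2 * x ^ 3 / α + 2) :
    M * (Real.exp x * Real.exp (-(3 * x / lam)) * (Real.exp 1 * lam) ^ M)
      ≤ Real.exp ((2 + 3 * Real.exp 1) * (Real.exp 1 * α)) *
          ((2 * x ^ 3 / α + 2) * Real.exp (-x)) := by
  set E := Real.exp 1
  set u := E * α / x ^ 2 with hu_def
  have hx0 : 0 < x := by linarith
  have hlam0 : 0 < lam := by rw [hlam]; positivity
  have hu : 0 ≤ u := by positivity
  have hE : 2 ≤ E := by have := Real.exp_one_gt_d9; linarith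
  have hElam : E * lam = 1 + u := by
    rw [hlam, mul_add, ← Real.exp_add]
    norm_num [u, E]
    ring
  have hpow : (E * lam) ^ M ≤ Real.exp (2 * E * x + 2 * E * α) := by
    calc (E * lam) ^ M ≤ Real.exp u ^ M := by
          rw [hElam, add_comm]
          exact pow_le_pow_left₀ (by positivity) (Real.add_one_le_exp u) M
      _ = Real.exp (M * u) := (Real.exp_nat_mul u M).symm
      _ ≤ Real.exp (2 * E * x + 2 * E * α) := by
          gcongr
          calc M * u ≤ (2 * x ^ 3 / α + 2) * u := by gcongr
            _ = 2 * E * x + 2 * E * α / x ^ 2 := by rw [hu_def]; field_simp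
            _ ≤ 2 * E * x + 2 * E * α := by
                gcongr
                exact div_le_self (by positivity) (one_le_pow₀ hx)
  have hdiv : 3 * E * x - 3 * E ^ 2 * α ≤ 3 * x / lam := by
    have hux : E * x * u ≤ E ^ 2 * α := by
      calc E * x * u = E ^ 2 * α / x := by rw [hu_def]; field_simp
        _ ≤ E ^ 2 * α := div_le_self (by positivity) hx
    have hquot : 3 * x / lam = 3 * E * x / (1 + u) := by
      rw [← hElam]; field_simp
    have hrecip : 3 * E * x * (1 - u) ≤ 3 * E * x / (1 + u) := by
      rw [le_div_iff₀ (by positivity)]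
      nlinarith [mul_nonneg (by positivity : (0 : ℝ) ≤ 3 * E * x) (sq_nonneg u)]
    linarith
  have hexp : Real.exp x * Real.exp (-(3 * x / lam)) * (E * lam) ^ M
      ≤ Real.exp ((2 + 3 * E) * (E * α)) * Real.exp (-x) := by
    calc Real.exp x * Real.exp (-(3 * x / lam)) * (E * lam) ^ M
        ≤ Real.exp x * Real.exp (-(3 * x / lam)) * Real.exp (2 * E * x + 2 * E * α) := by
          gcongr
      _ = Real.exp (x - 3 * x / lam + (2 * E * x + 2 * E * α)) := by
          rw [← Real.exp_add, ← Real.exp_add, sub_eq_add_neg]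
      _ ≤ Real.exp ((2 + 3 * E) * (E * α) + -x) := Real.exp_le_exp.2 (by nlinarith)
      _ = Real.exp ((2 + 3 * E) * (E * α)) * Real.exp (-x) := Real.exp_add _ _
  calc M * (Real.exp x * Real.exp (-(3 * x / lam)) * (E * lam) ^ M)
      ≤ (2 * x ^ 3 / α + 2) * (Real.exp ((2 + 3 * E) * (E * α)) * Real.exp (-x)) :=
        mul_le_mul hM hexp (by positivity) (by positivity)
    _ = Real.exp ((2 + 3 * E) * (E * α)) * ((2 * x ^ 3 / α + 2) * Real.exp (-x)) := by ring

theorem tendsto_cubic_mul_exp_neg_atTop (α : ℝ) :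
    Tendsto (fun x => (2 * x ^ 3 / α + 2) * Real.exp (-x)) atTop (nhds 0) := by
  have h := ((Real.tendsto_pow_mul_exp_neg_atTop_nhds_zero 3).const_mul (2 / α)).add
    ((Real.tendsto_pow_mul_exp_neg_atTop_nhds_zero 0).const_mul 2)
  simp only [mul_zero, add_zero] at h
  refine h.congr fun x => ?_
  ring

/-- Lemma 2.4: for λ_n = e⁻¹ + α (log n)⁻² and ℓ_n = ⌈(log n)³/α⌉, the probability that
some path of length ℓ' ∈ [ℓ_n, 2ℓ_n) has weight at most λ_n ℓ' and deviation at least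
3 log n tends to zero. -/
theorem no_light_path_with_large_deviation (α : ℝ) (hα : 0 < α) :
    Tendsto (fun n : ℕ =>
        P n {ω | ∃ ℓ' : ℕ, ⌈(Real.log n) ^ 3 / α⌉₊ ≤ ℓ' ∧ ℓ' < 2 * ⌈(Real.log n) ^ 3 / α⌉₊ ∧
          ∃ γ : Path n ℓ',
            weight ω γ ≤ (Real.exp (-1) + α * ((Real.log n) ^ 2)⁻¹) * ℓ' ∧
            3 * Real.log n ≤ deviation ω γ})
      atTop (nhds 0) := by
  set C := (2 + 3 * Real.exp 1) * (Real.exp 1 * α)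
  have hlim : Tendsto (fun n : ℕ => ENNReal.ofReal
      (Real.exp C * ((2 * Real.log n ^ 3 / α + 2) * Real.exp (-Real.log n)))) atTop (nhds 0) := by
    simpa using ENNReal.tendsto_ofReal (((tendsto_cubic_mul_exp_neg_atTop α).comp
      (Real.tendsto_log_atTop.comp tendsto_natCast_atTop_atTop)).const_mul (Real.exp C))
  refine tendsto_of_tendsto_of_tendsto_of_le_of_le' tendsto_const_nhds hlim
    (Eventually.of_forall fun _ => zero_le) ?_
  filter_upwards [eventually_ge_atTop 3] with n hn
  have hlog : 1 ≤ Real.log n := by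
    rw [Real.le_log_iff_exp_le (by positivity)]
    have h3 : (3 : ℝ) ≤ n := by exact_mod_cast hn
    linarith [Real.exp_one_lt_d9]
  have hM : ((2 * ⌈Real.log n ^ 3 / α⌉₊ : ℕ) : ℝ) ≤ 2 * Real.log n ^ 3 / α + 2 := by
    have := Nat.ceil_lt_add_one (show 0 ≤ Real.log n ^ 3 / α by positivity)
    rw [mul_div_assoc]
    push_cast
    linarith
  have hbound := mul_exp_mul_pow_le hα hlog rfl hM
  rw [Real.exp_log (by positivity)] at hbound
  calc _ ≤ P n {ω | ∃ ℓ < 2 * ⌈Real.log n ^ 3 / α⌉₊, ∃ γ : Path n ℓ,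
          weight ω γ ≤ (Real.exp (-1) + α * (Real.log n ^ 2)⁻¹) * ℓ ∧
          3 * Real.log n ≤ deviation ω γ} :=
        measure_mono <| by rintro ω ⟨ℓ, -, hℓ, γ, h⟩; exact ⟨ℓ, hℓ, γ, h⟩
    _ ≤ _ := P_exists_light_path_large_deviation_le (by omega)
        (le_add_of_nonneg_right (by positivity)) (by positivity) _
    _ ≤ _ := ENNReal.ofReal_le_ofReal hbound

end Paper
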